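/- arXiv:1811.00326 — 7 statements merged into one kernel-verified Lean document; each statement's English description precedes it below -/
import Mathlib

section
/- If X_λ is a Poisson random variable with parameter λ > 0 and x ≥ 2λ, then P(X_λ ≥ x) ≤ exp(-δ₀ x) where δ₀ = log 2 - 1/2. -/
open MeasureTheory ProbabilityTheory

/-! Chernoff's bound at `t = log 2`: `P(X ≥ x) ≤ 2 ^ (-x) 𝔼[2 ^ X] = 2 ^ (-x) e ^ λ`,
and `λ ≤ x / 2` turns `e ^ λ` into `e ^ (x / 2)`. -/

open Real
open scoped NNReal Nat

namespace ProbabilityTheory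

lemma hasSum_poisson_weight_mul_exp_mul (r : ℝ≥0) (t : ℝ) :
    HasSum (fun n : ℕ ↦ exp (-r) * r ^ n / n ! * exp (t * n)) (exp (r * (exp t - 1))) := by
  have h := (NormedSpace.expSeries_div_hasSum_exp ((r : ℝ) * exp t)).mul_left (exp (-r))
  rw [← exp_eq_exp_ℝ, ← exp_add, show -(r : ℝ) + r * exp t = r * (exp t - 1) by ring] at h
  refine h.congr_fun fun n ↦ ?_
  rw [mul_comm t, exp_nat_mul, mul_pow]
  ring

lemma integrable_exp_mul_poissonMeasure (r : ℝ≥0) (t : ℝ) :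
    Integrable (fun n : ℕ ↦ exp (t * n)) Po(r) := by
  rw [integrable_poissonMeasure_iff]
  simpa only [norm_of_nonneg (exp_nonneg _)] using
    (hasSum_poisson_weight_mul_exp_mul r t).summable

lemma mgf_poissonMeasure (r : ℝ≥0) (t : ℝ) :
    mgf (fun n : ℕ ↦ (n : ℝ)) Po(r) t = exp (r * (exp t - 1)) := by
  rw [mgf, integral_poissonMeasure]
  exact (hasSum_poisson_weight_mul_exp_mul r t).tsum_eq

lemma poissonMeasure_real_ge_le_exp (r : ℝ≥0) {t : ℝ} (ht : 0 ≤ t) (x : ℝ) :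
    Po(r).real {n : ℕ | x ≤ n} ≤ exp (-t * x + r * (exp t - 1)) := by
  rw [exp_add, ← mgf_poissonMeasure]
  exact measure_ge_le_exp_mul_mgf x ht (integrable_exp_mul_poissonMeasure r t)

lemma poissonMeasure_real_ge_le_of_two_mul_le (r : ℝ≥0) {x : ℝ} (hx : 2 * r ≤ x) :
    Po(r).real {n : ℕ | x ≤ n} ≤ exp (-(log 2 - 1 / 2) * x) := by
  refine (poissonMeasure_real_ge_le_exp r (log_nonneg one_le_two) x).trans (exp_le_exp.mpr ?_)
  rw [exp_log two_pos]
  linarith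

end ProbabilityTheory

theorem poisson_chernoff_bound_two_general {Ω : Type*} [MeasurableSpace Ω]
    (P : Measure Ω) [IsProbabilityMeasure P] (r : NNReal)
    (X : Ω → ℕ) (hX : Measure.map X P = poissonMeasure r)
    (x : ℝ) (hx : 2 * r ≤ x) :
    P {ω | x ≤ (X ω : ℝ)} ≤ ENNReal.ofReal (Real.exp (-(Real.log 2 - 1 / 2) * x)) := by
  have hXm : AEMeasurable X P := .of_map_ne_zero (hX ▸ IsProbabilityMeasure.ne_zero _)
  calc P {ω | x ≤ (X ω : ℝ)} = poissonMeasure r {n : ℕ | x ≤ n} := by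
        rw [← hX, Measure.map_apply_of_aemeasurable hXm .of_discrete]
        rfl
    _ = ENNReal.ofReal ((poissonMeasure r).real {n : ℕ | x ≤ n}) := (ofReal_measureReal).symm
    _ ≤ _ := ENNReal.ofReal_le_ofReal (poissonMeasure_real_ge_le_of_two_mul_le r hx)

theorem poisson_chernoff_bound_two {Ω : Type*} [MeasurableSpace Ω]
    (P : Measure Ω) [IsProbabilityMeasure P] (r : NNReal) (hr : 0 < r)
    (X : Ω → ℕ) (hX : Measure.map X P = poissonMeasure r)
    (x : ℝ) (hx : 2 * r ≤ x) :
    P {ω | x ≤ (X ω : ℝ)} ≤ ENNReal.ofReal (Real.exp (-(Real.log 2 - 1 / 2) * x)) :=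
  poisson_chernoff_bound_two_general P r X hX x hx
end

section
/- Let f : (0,∞) → (0,∞) be nondecreasing with ∫₁^∞ 1/f(t) dt = ∞. Then ∫₁^∞ 1/(f(t) ∨ t) dt = ∞, where a ∨ b denotes the maximum of a and b. -/
/-!
Suppose `∫ 1 / max (f t) t` were finite. Its integrand is antitone, so its integral over
`[x/2, x)` is at least `(x/2) / max (f x) x`; these are tails of a convergent integral, hence
`x / max (f x) x → 0`, which forces `f x > x` for all large `x`. Beyond such a point `1/f` and
`1 / max f id` coincide, while on the bounded interval before it `1/f ≤ 1/f 1`; so `∫ 1/f`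
would be finite as well.
-/

open MeasureTheory Filter Set

theorem MonotoneOn.antitoneOn_one_div {α : Type*} [Preorder α] {f : α → ℝ} {s : Set α}
    (hf : MonotoneOn f s) (hpos : ∀ t ∈ s, 0 < f t) : AntitoneOn (fun t => 1 / f t) s :=
  fun _ hx _ hy hxy => one_div_le_one_div_of_le (hpos _ hx) (hf hx hy hxy)

theorem tendsto_setLIntegral_Ici_atTop {μ : Measure ℝ} {h : ℝ → ENNReal} {a : ℝ}
    (hfin : ∫⁻ t in Ici a, h t ∂μ ≠ ⊤) :
    Tendsto (fun x => ∫⁻ t in Ici x, h t ∂μ) atTop (nhds 0) := by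
  have hempty : ⋂ x : ℝ, Ici x = ∅ :=
    eq_empty_of_forall_notMem fun t ht => by linarith [mem_Ici.1 (mem_iInter.1 ht (t + 1))]
  have hlim := tendsto_measure_iInter_atTop (μ := μ.withDensity h)
    (fun x => measurableSet_Ici.nullMeasurableSet) (fun _ _ hxy => Ici_subset_Ici.2 hxy)
    ⟨a, by rwa [withDensity_apply _ measurableSet_Ici]⟩
  rw [hempty, measure_empty] at hlim
  exact hlim.congr fun x => withDensity_apply _ measurableSet_Ici

theorem AntitoneOn.ofReal_mul_le_setLIntegral_Ico {φ : ℝ → ℝ} {a b : ℝ}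
    (hφ : AntitoneOn φ (Icc a b)) :
    ENNReal.ofReal (φ b) * ENNReal.ofReal (b - a) ≤ ∫⁻ t in Ico a b, ENNReal.ofReal (φ t) := by
  rw [← Real.volume_Ico, ← setLIntegral_const]
  refine setLIntegral_mono' measurableSet_Ico fun t ht => ENNReal.ofReal_le_ofReal ?_
  exact hφ ⟨ht.1, ht.2.le⟩ ⟨ht.1.trans ht.2.le, le_rfl⟩ ht.2.le

theorem AntitoneOn.setLIntegral_Ico_le {φ : ℝ → ℝ} {a b : ℝ}
    (hφ : AntitoneOn φ (Icc a b)) :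
    ∫⁻ t in Ico a b, ENNReal.ofReal (φ t) ≤ ENNReal.ofReal (φ a) * ENNReal.ofReal (b - a) := by
  rw [← Real.volume_Ico, ← setLIntegral_const]
  refine setLIntegral_mono measurable_const fun t ht => ENNReal.ofReal_le_ofReal ?_
  exact hφ ⟨le_rfl, ht.1.trans ht.2.le⟩ ⟨ht.1, ht.2.le⟩ ht.1

theorem AntitoneOn.setLIntegral_Ici_le {φ : ℝ → ℝ} {a b : ℝ} (hφ : AntitoneOn φ (Ici a))
    (hab : a ≤ b) :
    ∫⁻ t in Ici a, ENNReal.ofReal (φ t) ≤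
      ENNReal.ofReal (φ a) * ENNReal.ofReal (b - a) + ∫⁻ t in Ici b, ENNReal.ofReal (φ t) := by
  rw [← Ico_union_Ici_eq_Ici hab]
  exact (lintegral_union_le _ _ _).trans
    (add_le_add_left (hφ.mono Icc_subset_Ici_self).setLIntegral_Ico_le _)

theorem AntitoneOn.tendsto_ofReal_mul_atTop_of_setLIntegral_ne_top {φ : ℝ → ℝ} {a : ℝ}
    (hφ : AntitoneOn φ (Ici a)) (hfin : ∫⁻ t in Ici a, ENNReal.ofReal (φ t) ≠ ⊤) :
    Tendsto (fun t => ENNReal.ofReal (t * φ t)) atTop (nhds 0) := by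
  have htail : Tendsto (fun x => 2 * ∫⁻ t in Ici (x / 2), ENNReal.ofReal (φ t)) atTop (nhds 0) := by
    simpa using ENNReal.Tendsto.const_mul
      ((tendsto_setLIntegral_Ici_atTop hfin).comp (tendsto_id.atTop_div_const two_pos))
      (Or.inr ENNReal.ofNat_ne_top)
  refine tendsto_of_tendsto_of_tendsto_of_le_of_le' tendsto_const_nhds htail
    (Eventually.of_forall fun _ => zero_le) ?_
  filter_upwards [eventually_ge_atTop (max (2 * a) 0)] with x hx
  have hx2 : a ≤ x / 2 := by linarith [le_max_left (2 * a) 0]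
  have hx0 : 0 ≤ x := (le_max_right _ _).trans hx
  calc ENNReal.ofReal (x * φ x)
      = 2 * (ENNReal.ofReal (φ x) * ENNReal.ofReal (x - x / 2)) := by
        rw [← ENNReal.ofReal_mul' (by linarith), ← ENNReal.ofReal_ofNat,
          ← ENNReal.ofReal_mul zero_le_two]
        ring_nf
    _ ≤ 2 * ∫⁻ t in Ico (x / 2) x, ENNReal.ofReal (φ t) := by
        gcongr
        exact (hφ.mono (Icc_subset_Ici_self.trans (Ici_subset_Ici.2 hx2)))
          |>.ofReal_mul_le_setLIntegral_Ico
    _ ≤ 2 * ∫⁻ t in Ici (x / 2), ENNReal.ofReal (φ t) := by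
        gcongr
        exact Ico_subset_Ici_self

theorem eventually_lt_of_setLIntegral_one_div_max_ne_top {f : ℝ → ℝ} {a : ℝ} (ha : 0 < a)
    (hf : MonotoneOn f (Ici a))
    (hfin : ∫⁻ t in Ici a, ENNReal.ofReal (1 / max (f t) t) ≠ ⊤) :
    ∀ᶠ t in atTop, t < f t := by
  have hmax_pos : ∀ t ∈ Ici a, 0 < max (f t) t := fun t ht => lt_max_of_lt_right (ha.trans_le ht)
  have hmax_mono : MonotoneOn (fun t => max (f t) t) (Ici a) := hf.max monotoneOn_id
  have hlim := (hmax_mono.antitoneOn_one_div hmax_pos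
    ).tendsto_ofReal_mul_atTop_of_setLIntegral_ne_top hfin
  filter_upwards [hlim.eventually_lt_const zero_lt_one, eventually_ge_atTop a] with t hsmall hta
  rw [ENNReal.ofReal_lt_one, mul_one_div, div_lt_one (hmax_pos t hta)] at hsmall
  exact (lt_max_iff.1 hsmall).resolve_right (lt_irrefl t)

theorem divergent_integral_max (f : ℝ → ℝ)
    (hmono : MonotoneOn f (Set.Ioi 0)) (hpos : ∀ t > (0 : ℝ), 0 < f t)
    (hint : ∫⁻ t in Set.Ici (1 : ℝ), ENNReal.ofReal (1 / f t) = ⊤) :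
    ∫⁻ t in Set.Ici (1 : ℝ), ENNReal.ofReal (1 / max (f t) t) = ⊤ := by
  by_contra hfin
  have hIci : Ici (1 : ℝ) ⊆ Ioi 0 := Ici_subset_Ioi.2 one_pos
  obtain ⟨T, hT⟩ := ((eventually_lt_of_setLIntegral_one_div_max_ne_top one_pos
    (hmono.mono hIci) hfin).and (eventually_ge_atTop 1)).exists_forall_of_atTop
  have hT1 : 1 ≤ T := (hT T le_rfl).2
  refine hint.not_lt ?_
  calc ∫⁻ t in Ici 1, ENNReal.ofReal (1 / f t)
      ≤ ENNReal.ofReal (1 / f 1) * ENNReal.ofReal (T - 1) +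
          ∫⁻ t in Ici T, ENNReal.ofReal (1 / f t) :=
        ((hmono.antitoneOn_one_div hpos).mono hIci).setLIntegral_Ici_le hT1
    _ = ENNReal.ofReal (1 / f 1) * ENNReal.ofReal (T - 1) +
          ∫⁻ t in Ici T, ENNReal.ofReal (1 / max (f t) t) := by
        congr 1
        exact setLIntegral_congr_fun measurableSet_Ici fun t ht => by
          rw [max_eq_left (hT t ht).1.le]
    _ ≤ ENNReal.ofReal (1 / f 1) * ENNReal.ofReal (T - 1) +
          ∫⁻ t in Ici 1, ENNReal.ofReal (1 / max (f t) t) :=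
        add_le_add_right (lintegral_mono_set (Ici_subset_Ici.2 hT1)) _
    _ < ⊤ := ENNReal.add_lt_top.2
        ⟨ENNReal.mul_lt_top ENNReal.ofReal_lt_top ENNReal.ofReal_lt_top, lt_top_iff_ne_top.2 hfin⟩
end

section
/- If (a_n) is a strictly increasing sequence of positive reals tending to infinity with a_1 = 1, then the series ∑_{n≥1} (a_{n+1} - a_n)/a_{n+1} diverges. -/
open Filter

theorem increment_ratio_series_diverges (a : ℕ → ℝ)
    (hpos : ∀ n, 0 < a n) (h1 : a 1 = 1) (hmono : StrictMono a)
    (hinf : Tendsto a atTop atTop) :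
    ¬ Summable (fun n : ℕ => (a (n + 1) - a n) / a (n + 1)) := by
  intro hs
  set f := fun n : ℕ => (a (n + 1) - a n) / a (n + 1) with hf
  have hfpos : ∀ n, 0 ≤ f n := fun n =>
    div_nonneg (by linarith [hmono (Nat.lt_succ_self n)]) (hpos _).le
  have hT : ∀ m : ℕ, (1 : ℝ) ≤ ∑' k, f (k + m) := by
    intro m
    have hsm : Summable (fun k => f (k + m)) := (summable_nat_add_iff m).2 hs
    have hle : ∀ n : ℕ, 1 - a m / a (n + m) ≤ ∑' k, f (k + m) := by
      intro n
      have h1' : ∑ k ∈ Finset.range n, f (k + m) ≤ ∑' k, f (k + m) :=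
        Summable.sum_le_tsum _ (fun i _ => hfpos _) hsm
      have h2 : ∑ k ∈ Finset.range n, (a (k + m + 1) - a (k + m)) / a (n + m) ≤
          ∑ k ∈ Finset.range n, f (k + m) := by
        apply Finset.sum_le_sum
        intro k hk
        simp only [hf]
        gcongr
        · linarith [hmono (Nat.lt_succ_self (k + m))]
        · exact hpos _
        · exact hmono.monotone (by have := Finset.mem_range.mp hk; omega)
      have hsum : ∑ k ∈ Finset.range n, (a (k + m + 1) - a (k + m))
          = a (n + m) - a m := by
        simp_rw [show ∀ i : ℕ, i + m + 1 = i + 1 + m from fun i => by omega]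
        simpa using Finset.sum_range_sub (fun k => a (k + m)) n
      have h3 : ∑ k ∈ Finset.range n, (a (k + m + 1) - a (k + m)) / a (n + m)
          = 1 - a m / a (n + m) := by
        rw [← Finset.sum_div, hsum, sub_div, div_self (hpos (n + m)).ne']
      linarith
    have htend : Tendsto (fun n : ℕ => 1 - a m / a (n + m)) atTop (nhds 1) := by
      have h0 : Tendsto (fun n : ℕ => a m / a (n + m)) atTop (nhds 0) :=
        Tendsto.const_div_atTop (hinf.comp (tendsto_add_atTop_nat m)) _
      have := Tendsto.sub
        (tendsto_const_nhds : Tendsto (fun _ : ℕ => (1 : ℝ)) atTop (nhds 1)) h0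
      simpa using this
    exact le_of_tendsto' htend hle
  have htail : Tendsto (fun m : ℕ => ∑' k, f (k + m)) atTop (nhds 0) :=
    tendsto_sum_nat_add f
  have : (1 : ℝ) ≤ 0 := ge_of_tendsto' htail hT
  linarith
end

section
/- Let λ be a measure on (0,∞) with ∫₀^∞ (z ∨ z^{1+2/d}) λ(dz) < ∞, let f : (0,∞) → (0,∞) be nondecreasing, and let (t_n) be a nondecreasing sequence with increments Δt_n = t_n - t_{n-1} (t_0 = 0). Then the series ∑_{n≥1} ∫₀^∞ ((z/f(t_n))^{2/d} ∧ Δt_n) · (z/f(t_n)) λ(dz) converges if and only if ∑_{n≥1} (f(t_n)^{-2/d} ∧ Δt_n)/f(t_n) < ∞, provided λ is not the zero measure. -/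
/-!
Write `a = f(t_n)`, `δ = Δt_n` and `p = 2/d`. Since `(z/a)^p = z^p a^{-p}`, the summand
`((z/a)^p ∧ δ) (z/a)` lies between `(z ∧ z^{1+p}) (a^{-p} ∧ δ)/a` and `(z ∨ z^{1+p}) (a^{-p} ∧ δ)/a`.
Integrating in `z`, each term of the first series is squeezed between the corresponding term of
the second series multiplied by `∫ (z ∧ z^{1+p}) dλ`, which is positive because `λ ≠ 0`, and by
`∫ (z ∨ z^{1+p}) dλ`, which is finite by the moment assumption.
-/

open MeasureTheory Filter ENNReal Set

section MinMax

variable {x c δ : ℝ}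

lemma min_one_mul_min_le_min_mul (hx : 0 ≤ x) (hc : 0 ≤ c) (hδ : 0 ≤ δ) :
    min 1 x * min c δ ≤ min (x * c) δ :=
  le_min (mul_le_mul (min_le_right _ _) (min_le_left _ _) (le_min hc hδ) hx)
    ((mul_le_of_le_one_left (le_min hc hδ) (min_le_left _ _)).trans (min_le_right _ _))

lemma min_mul_le_max_one_mul_min (hc : 0 ≤ c) (hδ : 0 ≤ δ) :
    min (x * c) δ ≤ max 1 x * min c δ := by
  rcases le_total c δ with h | h
  · rw [min_eq_left h]
    exact (min_le_left _ _).trans (mul_le_mul_of_nonneg_right (le_max_right _ _) hc)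
  · rw [min_eq_right h]
    exact (min_le_right _ _).trans (le_mul_of_one_le_left hδ (le_max_left _ _))

end MinMax

section Rpow

variable (p : ℝ) {z a δ : ℝ}

lemma div_rpow_eq_rpow_mul_rpow_neg (hz : 0 ≤ z) (ha : 0 ≤ a) :
    (z / a) ^ p = z ^ p * a ^ (-p) := by
  rw [Real.div_rpow hz ha, Real.rpow_neg ha, div_eq_mul_inv]

lemma min_self_rpow_mul_le (hz : 0 < z) (ha : 0 < a) (hδ : 0 ≤ δ) :
    min z (z ^ (1 + p)) * (min (a ^ (-p)) δ / a) ≤ min ((z / a) ^ p) δ * (z / a) := by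
  have hmin : min z (z ^ (1 + p)) = z * min 1 (z ^ p) := by
    rw [Real.rpow_add hz, Real.rpow_one, mul_min_of_nonneg _ _ hz.le, mul_one]
  rw [hmin, div_rpow_eq_rpow_mul_rpow_neg p hz.le ha.le]
  calc z * min 1 (z ^ p) * (min (a ^ (-p)) δ / a)
      = min 1 (z ^ p) * min (a ^ (-p)) δ * (z / a) := by ring
    _ ≤ min (z ^ p * a ^ (-p)) δ * (z / a) := by
        gcongr
        exact min_one_mul_min_le_min_mul (Real.rpow_nonneg hz.le p) (Real.rpow_nonneg ha.le _) hδ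

lemma min_rpow_div_mul_le (hz : 0 < z) (ha : 0 < a) (hδ : 0 ≤ δ) :
    min ((z / a) ^ p) δ * (z / a) ≤ max z (z ^ (1 + p)) * (min (a ^ (-p)) δ / a) := by
  have hmax : max z (z ^ (1 + p)) = z * max 1 (z ^ p) := by
    rw [Real.rpow_add hz, Real.rpow_one, mul_max_of_nonneg _ _ hz.le, mul_one]
  rw [hmax, div_rpow_eq_rpow_mul_rpow_neg p hz.le ha.le]
  calc min (z ^ p * a ^ (-p)) δ * (z / a)
      ≤ max 1 (z ^ p) * min (a ^ (-p)) δ * (z / a) := by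
        gcongr
        exact min_mul_le_max_one_mul_min (Real.rpow_nonneg ha.le _) hδ
    _ = z * max 1 (z ^ p) * (min (a ^ (-p)) δ / a) := by ring

end Rpow

lemma ENNReal.tsum_ne_top_iff_of_le_mul {ι : Type*} {S T : ι → ℝ≥0∞} {c C : ℝ≥0∞}
    (hc : c ≠ 0) (hC : C ≠ ⊤) (hlow : ∀ i, c * S i ≤ T i) (hup : ∀ i, T i ≤ C * S i) :
    ∑' i, T i ≠ ⊤ ↔ ∑' i, S i ≠ ⊤ := by
  have hsum_low : c * ∑' i, S i ≤ ∑' i, T i :=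
    ENNReal.tsum_mul_left ▸ ENNReal.tsum_le_tsum hlow
  have hsum_up : ∑' i, T i ≤ C * ∑' i, S i :=
    ENNReal.tsum_mul_left ▸ ENNReal.tsum_le_tsum hup
  refine ⟨fun hT hS => hT ?_, fun hS => ne_top_of_le_ne_top (ENNReal.mul_ne_top hC hS) hsum_up⟩
  rw [hS, ENNReal.mul_top hc] at hsum_low
  exact top_le_iff.mp hsum_low

lemma MeasureTheory.Measure.measure_Ioi_ne_zero_of_measure_Iic_eq_zero {μ : Measure ℝ}
    {a : ℝ} (hμ : μ ≠ 0) (hIic : μ (Iic a) = 0) : μ (Ioi a) ≠ 0 := fun hIoi =>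
  hμ <| Measure.measure_univ_eq_zero.mp <| Iic_union_Ioi (a := a) ▸ measure_union_null hIic hIoi

lemma MeasureTheory.setLIntegral_pos_of_pos {α : Type*} [MeasurableSpace α] {μ : Measure α}
    {s : Set α} {g : α → ℝ≥0∞} (hg : Measurable g) (hpos : ∀ x ∈ s, 0 < g x) (hs : μ s ≠ 0) :
    0 < ∫⁻ x in s, g x ∂μ := by
  have hsupp : Function.support g ∩ s = s := inter_eq_right.2 fun x hx => (hpos x hx).ne'
  rw [setLIntegral_pos_iff hg, hsupp]
  exact pos_iff_ne_zero.2 hs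

section Integrals

variable (μ : Measure ℝ) (p : ℝ) {a δ : ℝ}

lemma lintegral_min_self_rpow_mul_le (ha : 0 < a) (hδ : 0 ≤ δ) :
    (∫⁻ z in Ioi 0, ENNReal.ofReal (min z (z ^ (1 + p))) ∂μ) *
        ENNReal.ofReal (min (a ^ (-p)) δ / a) ≤
      ∫⁻ z in Ioi 0, ENNReal.ofReal (min ((z / a) ^ p) δ * (z / a)) ∂μ := by
  rw [← lintegral_mul_const' _ _ ofReal_ne_top]
  refine setLIntegral_mono' measurableSet_Ioi fun z (hz : 0 < z) => ?_
  rw [← ENNReal.ofReal_mul (le_min hz.le (Real.rpow_nonneg hz.le _))]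
  exact ENNReal.ofReal_le_ofReal (min_self_rpow_mul_le p hz ha hδ)

lemma lintegral_min_rpow_div_mul_le (ha : 0 < a) (hδ : 0 ≤ δ) :
    ∫⁻ z in Ioi 0, ENNReal.ofReal (min ((z / a) ^ p) δ * (z / a)) ∂μ ≤
      (∫⁻ z in Ioi 0, ENNReal.ofReal (max z (z ^ (1 + p))) ∂μ) *
        ENNReal.ofReal (min (a ^ (-p)) δ / a) := by
  rw [← lintegral_mul_const' _ _ ofReal_ne_top]
  refine setLIntegral_mono' measurableSet_Ioi fun z (hz : 0 < z) => ?_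
  rw [← ENNReal.ofReal_mul (le_max_of_le_left hz.le)]
  exact ENNReal.ofReal_le_ofReal (min_rpow_div_mul_le p hz ha hδ)

lemma lintegral_min_self_rpow_pos (hμ : μ (Ioi 0) ≠ 0) :
    0 < ∫⁻ z in Ioi 0, ENNReal.ofReal (min z (z ^ (1 + p))) ∂μ :=
  setLIntegral_pos_of_pos (by fun_prop)
    (fun z (hz : 0 < z) => ENNReal.ofReal_pos.2 (lt_min hz (Real.rpow_pos_of_pos hz _))) hμ

end Integrals

theorem series_condition_iff_general (d : ℕ) (lam : Measure ℝ)
    (hne : lam ≠ 0) (hsupp : lam (Set.Iic 0) = 0)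
    (hmom : ∫⁻ z in Set.Ioi (0 : ℝ),
        ENNReal.ofReal (max z (z ^ (1 + 2 / (d : ℝ)))) ∂lam ≠ ⊤)
    (f : ℝ → ℝ) (hfpos : ∀ x, 0 < f x)
    (t : ℕ → ℝ) (ht : Monotone t) :
    (∑' n : ℕ, ∫⁻ z in Set.Ioi (0 : ℝ),
        ENNReal.ofReal
          (min ((z / f (t (n + 1))) ^ (2 / (d : ℝ))) (t (n + 1) - t n)
            * (z / f (t (n + 1)))) ∂lam) ≠ ⊤
      ↔ (∑' n : ℕ,
          ENNReal.ofReal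
            (min ((f (t (n + 1))) ^ (-(2 : ℝ) / (d : ℝ))) (t (n + 1) - t n)
              / f (t (n + 1)))) ≠ ⊤ := by
  rw [neg_div]
  have hδ (n : ℕ) : 0 ≤ t (n + 1) - t n := sub_nonneg.2 (ht n.le_succ)
  have hlam : lam (Ioi 0) ≠ 0 := Measure.measure_Ioi_ne_zero_of_measure_Iic_eq_zero hne hsupp
  exact ENNReal.tsum_ne_top_iff_of_le_mul
    (lintegral_min_self_rpow_pos lam _ hlam).ne' hmom
    (fun n => lintegral_min_self_rpow_mul_le lam _ (hfpos _) (hδ n))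
    (fun n => lintegral_min_rpow_div_mul_le lam _ (hfpos _) (hδ n))

theorem series_condition_iff (d : ℕ) (hd : 0 < d) (lam : Measure ℝ)
    (hne : lam ≠ 0) (hsupp : lam (Set.Iic 0) = 0)
    (hmom : ∫⁻ z in Set.Ioi (0 : ℝ),
        ENNReal.ofReal (max z (z ^ (1 + 2 / (d : ℝ)))) ∂lam ≠ ⊤)
    (f : ℝ → ℝ) (hf : Monotone f) (hfpos : ∀ x, 0 < f x)
    (t : ℕ → ℝ) (ht : Monotone t) (ht0 : t 0 = 0)
    (htinf : Tendsto t atTop atTop) :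
    (∑' n : ℕ, ∫⁻ z in Set.Ioi (0 : ℝ),
        ENNReal.ofReal
          (min ((z / f (t (n + 1))) ^ (2 / (d : ℝ))) (t (n + 1) - t n)
            * (z / f (t (n + 1)))) ∂lam) ≠ ⊤
      ↔ (∑' n : ℕ,
          ENNReal.ofReal
            (min ((f (t (n + 1))) ^ (-(2 : ℝ) / (d : ℝ))) (t (n + 1) - t n)
              / f (t (n + 1)))) ≠ ⊤ :=
  series_condition_iff_general d lam hne hsupp hmom f hfpos t ht
end

section
/- Let p > d/(d+2) and t_n = n^p, Δt_n = t_n - t_{n-1}. Let λ be a measure on (0,∞) with ∫₀^∞ z log⁺(z) λ(dz) < ∞ where log⁺(t) = log(e+t). Then ∑_{n≥1} ∫₀^∞ ((z/t_n)^{2/d} ∧ Δt_n) · (z/t_n) λ(dz) < ∞. -/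
/-!
Write `s = 2/d`. For fixed `z > 0` the `n`-th term is at most `(p+1) z/(n+1)` (keep the `Δt_n`
branch of the minimum) and at most `z^(s+1) (n+1)^(-p(s+1))` (keep the other branch), where
`p(s+1) > 1` is exactly `p > d/(d+2)`. Using the first bound below a cut-off `N ≈ (e+z)^(s/r)`,
`r = p(s+1) - 1`, and the second above it, the whole series is at most `C z log(e+z)` with `C`
independent of `z`; Tonelli and the moment hypothesis finish the proof.
-/

open MeasureTheory Real

theorem one_sub_rpow_le_mul {x p : ℝ} (hx0 : 0 ≤ x) (hx1 : x ≤ 1) (hp : 0 < p) :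
    1 - x ^ p ≤ (p + 1) * (1 - x) := by
  rcases le_or_gt p 1 with hp1 | hp1
  · rcases hx0.eq_or_lt with rfl | hx0
    · rw [zero_rpow hp.ne']; nlinarith
    · have := rpow_le_rpow_of_exponent_ge hx0 hx1 hp1
      rw [rpow_one] at this
      nlinarith
  · -- Bernoulli's inequality
    have := one_add_mul_self_le_rpow_one_add (show (-1 : ℝ) ≤ x - 1 by linarith) hp1.le
    rw [add_sub_cancel] at this
    nlinarith

theorem rpow_add_one_sub_rpow_le {p t : ℝ} (hp : 0 < p) (ht : 0 ≤ t) :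
    (t + 1) ^ p - t ^ p ≤ (p + 1) * (t + 1) ^ p / (t + 1) := by
  have ht1 : 0 < t + 1 := by linarith
  have key := one_sub_rpow_le_mul (div_nonneg ht ht1.le)
    ((div_le_one ht1).2 (by linarith)) hp
  rw [div_rpow ht ht1.le, one_sub_div ht1.ne', one_sub_div (rpow_pos_of_pos ht1 p).ne',
    add_sub_cancel_left, div_le_iff₀ (rpow_pos_of_pos ht1 p)] at key
  calc _ ≤ (p + 1) * (1 / (t + 1)) * (t + 1) ^ p := key
    _ = _ := by ring

theorem tsum_rpow_neg_tail_le {r : ℝ} (hr : 0 < r) {N : ℕ} (hN : 0 < N) :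
    ∑' n : ℕ, ((n + N + 1 : ℕ) : ℝ) ^ (-(r + 1)) ≤ (N : ℝ) ^ (-r) / r := by
  have hN' : (0 : ℝ) < N := by exact_mod_cast hN
  have := AntitoneOn.tsum_comp_add_le_integral (f := fun x : ℝ => x ^ (-(r + 1))) N
    (fun x hx y _ hxy => rpow_le_rpow_of_nonpos (hN'.trans_le hx) hxy (by linarith))
    (integrableOn_Ioi_rpow_of_lt (by linarith) hN')
    (fun x hx => rpow_nonneg (hN'.trans hx).le _)
  rw [integral_Ioi_rpow_of_lt (by linarith) hN'] at this
  convert this using 1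
  rw [show -(r + 1) + 1 = -r by ring, neg_div, div_neg, neg_neg]

theorem summable_succ_rpow_neg {r : ℝ} (hr : 0 < r) :
    Summable fun n : ℕ => ((n + 1 : ℕ) : ℝ) ^ (-(r + 1)) :=
  (summable_nat_add_iff 1).2 (summable_nat_rpow.2 (by linarith))

theorem summable_and_tsum_le_of_le_div_of_le_rpow {a : ℕ → ℝ} {A B r : ℝ} (hr : 0 < r)
    (ha : ∀ n, 0 ≤ a n) (hA : ∀ n, a n ≤ A / (n + 1))
    (hB : ∀ n, a n ≤ B * ((n + 1 : ℕ) : ℝ) ^ (-(r + 1))) {N : ℕ} (hN : 0 < N) :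
    Summable a ∧ ∑' n, a n ≤ A * (1 + log N) + B * ((N : ℝ) ^ (-r) / r) := by
  have hA0 : 0 ≤ A := by simpa using (ha 0).trans (hA 0)
  have hB0 : 0 ≤ B := by simpa using (ha 0).trans (hB 0)
  have hsum : Summable a :=
    .of_nonneg_of_le ha hB ((summable_succ_rpow_neg hr).mul_left B)
  refine ⟨hsum, ?_⟩
  rw [← hsum.sum_add_tsum_nat_add N]
  gcongr
  · calc ∑ n ∈ Finset.range N, a n ≤ ∑ n ∈ Finset.range N, A / (n + 1) :=
          Finset.sum_le_sum fun n _ => hA n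
      _ = A * harmonic N := by
          simp [harmonic, Finset.mul_sum, div_eq_mul_inv]
      _ ≤ A * (1 + log N) := by gcongr; exact harmonic_le_one_add_log N
  · calc ∑' n, a (n + N) ≤ ∑' n, B * ((n + N + 1 : ℕ) : ℝ) ^ (-(r + 1)) :=
          (hsum.comp_injective (add_left_injective N)).tsum_le_tsum (fun n => hB _)
            (((summable_nat_add_iff N).2 (summable_succ_rpow_neg hr)).mul_left B)
      _ = B * ∑' n : ℕ, ((n + N + 1 : ℕ) : ℝ) ^ (-(r + 1)) := tsum_mul_left
      _ ≤ B * ((N : ℝ) ^ (-r) / r) := by gcongr; exact tsum_rpow_neg_tail_le hr hN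

/-- The `(n+1)`-st summand, `t_(n+1) = (n+1)^p`, with `s` in place of `2/d`. -/
noncomputable def seriesTerm (s p z : ℝ) (n : ℕ) : ℝ :=
  min ((z / ((n : ℝ) + 1) ^ p) ^ s) (((n : ℝ) + 1) ^ p - (n : ℝ) ^ p)
    * (z / ((n : ℝ) + 1) ^ p)

section seriesTerm

variable {s p z : ℝ}

theorem seriesTerm_nonneg (hp : 0 ≤ p) (hz : 0 ≤ z) (n : ℕ) : 0 ≤ seriesTerm s p z n := by
  have hmono : (n : ℝ) ^ p ≤ ((n : ℝ) + 1) ^ p :=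
    rpow_le_rpow (Nat.cast_nonneg n) (le_add_of_nonneg_right zero_le_one) hp
  unfold seriesTerm
  exact mul_nonneg (le_min (by positivity) (sub_nonneg.2 hmono)) (by positivity)

theorem seriesTerm_le_div (hp : 0 < p) (hz : 0 ≤ z) (n : ℕ) :
    seriesTerm s p z n ≤ (p + 1) * z / (n + 1) := by
  have ht : (0 : ℝ) < (n + 1) ^ p := by positivity
  calc seriesTerm s p z n
        ≤ (((n : ℝ) + 1) ^ p - (n : ℝ) ^ p) * (z / ((n : ℝ) + 1) ^ p) := by
        unfold seriesTerm; gcongr; exact min_le_right _ _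
    _ ≤ (p + 1) * ((n : ℝ) + 1) ^ p / (n + 1) * (z / ((n : ℝ) + 1) ^ p) := by
        gcongr; exact rpow_add_one_sub_rpow_le hp (Nat.cast_nonneg n)
    _ = (p + 1) * z / (n + 1) := by field_simp

theorem seriesTerm_le_rpow (hz : 0 < z) (n : ℕ) :
    seriesTerm s p z n ≤ z ^ (s + 1) * ((n + 1 : ℕ) : ℝ) ^ (-(p * (s + 1))) := by
  have hn : (0 : ℝ) < n + 1 := by positivity
  have hzt : 0 < z / ((n : ℝ) + 1) ^ p := by positivity
  calc seriesTerm s p z n ≤ (z / ((n : ℝ) + 1) ^ p) ^ s * (z / ((n : ℝ) + 1) ^ p) := by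
        unfold seriesTerm; gcongr; exact min_le_left _ _
    _ = z ^ (s + 1) * ((n + 1 : ℕ) : ℝ) ^ (-(p * (s + 1))) := by
        push_cast
        rw [← rpow_add_one hzt.ne', div_rpow hz.le (by positivity), ← rpow_mul hn.le,
          rpow_neg hn.le, div_eq_mul_inv]

end seriesTerm

theorem exists_nat_rpow_le_and_log_le {x a : ℝ} (hx : 2 ≤ x) (ha : 0 ≤ a) :
    ∃ N : ℕ, 0 < N ∧ x ^ a ≤ N ∧ log N ≤ (a + 1) * log x := by
  have hxa : 1 ≤ x ^ a := one_le_rpow (by linarith) ha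
  refine ⟨⌈x ^ a⌉₊, Nat.ceil_pos.2 (by linarith), Nat.le_ceil _, ?_⟩
  have hN : (0 : ℝ) < ⌈x ^ a⌉₊ := by simp; linarith
  calc log ⌈x ^ a⌉₊ ≤ log (x ^ a * x) := by
        gcongr
        nlinarith [Nat.ceil_lt_add_one (show 0 ≤ x ^ a by linarith)]
    _ = (a + 1) * log x := by
        rw [← rpow_add_one (by linarith), log_rpow (by linarith)]

theorem exists_tsum_seriesTerm_le {s p : ℝ} (hs : 0 < s) (hp : 0 < p) (hps : 1 < p * (s + 1)) :
    ∃ C, ∀ z, 0 < z →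
      ∑' n, ENNReal.ofReal (seriesTerm s p z n) ≤
        ENNReal.ofReal C * ENNReal.ofReal (z * log (exp 1 + z)) := by
  obtain ⟨r, hr, hpsr⟩ : ∃ r, 0 < r ∧ p * (s + 1) = r + 1 :=
    ⟨p * (s + 1) - 1, by linarith, by ring⟩
  refine ⟨(p + 1) * (s / r + 2) + 1 / r, fun z hz => ?_⟩
  set x := exp 1 + z
  have hx : 2 ≤ x := by linarith [add_one_le_exp 1]
  have hlog : 1 ≤ log x := by
    rw [← log_exp 1]; exact log_le_log (exp_pos 1) (by linarith)
  -- the cut-off where the two bounds on `seriesTerm` balance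
  obtain ⟨N, hN, hxN, hlogN⟩ := exists_nat_rpow_le_and_log_le hx (div_pos hs hr).le
  obtain ⟨hsum, hle⟩ := summable_and_tsum_le_of_le_div_of_le_rpow hr
    (seriesTerm_nonneg hp.le hz.le) (seriesTerm_le_div hp hz.le)
    (fun n => hpsr ▸ seriesTerm_le_rpow hz n) hN
  have hzN : z ^ s * (N : ℝ) ^ (-r) ≤ 1 := by
    have hNpos : (0 : ℝ) < N := by exact_mod_cast hN
    have : z ^ s ≤ (N : ℝ) ^ r :=
      calc z ^ s ≤ x ^ s := by gcongr; linarith [exp_pos 1]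
        _ = (x ^ (s / r)) ^ r := by rw [← rpow_mul (by linarith), div_mul_cancel₀ _ hr.ne']
        _ ≤ (N : ℝ) ^ r := by gcongr
    rw [rpow_neg hNpos.le, ← div_eq_mul_inv, div_le_one (by positivity)]
    exact this
  rw [← ENNReal.ofReal_tsum_of_nonneg (seriesTerm_nonneg hp.le hz.le) hsum,
    ← ENNReal.ofReal_mul (by positivity)]
  refine ENNReal.ofReal_le_ofReal (hle.trans ?_)
  calc (p + 1) * z * (1 + log N) + z ^ (s + 1) * ((N : ℝ) ^ (-r) / r)
      = (p + 1) * z * (1 + log N) + z * (z ^ s * (N : ℝ) ^ (-r)) / r := by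
        rw [rpow_add_one hz.ne']; ring
    _ ≤ (p + 1) * z * ((s / r + 2) * log x) + z * log x / r := by
        gcongr (p + 1) * z * ?_ + z * ?_ / r
        · linarith
        · exact hzN.trans hlog
    _ = ((p + 1) * (s / r + 2) + 1 / r) * (z * log x) := by ring

theorem series_finite_for_fast_polynomial_sequence_general (d : ℕ) (hd : 0 < d)
    (p : ℝ) (hp : (d : ℝ) / (d + 2) < p) (lam : Measure ℝ)
    (hmom : ∫⁻ z in Set.Ioi (0 : ℝ),
        ENNReal.ofReal (z * Real.log (Real.exp 1 + z)) ∂lam ≠ ⊤) :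
    (∑' n : ℕ, ∫⁻ z in Set.Ioi (0 : ℝ),
        ENNReal.ofReal
          (min ((z / ((n : ℝ) + 1) ^ p) ^ (2 / (d : ℝ)))
              (((n : ℝ) + 1) ^ p - (n : ℝ) ^ p)
            * (z / ((n : ℝ) + 1) ^ p)) ∂lam) ≠ ⊤ := by
  have hd' : (0 : ℝ) < d := by exact_mod_cast hd
  have hp0 : 0 < p := (div_pos hd' (by linarith)).trans hp
  have hps : 1 < p * (2 / d + 1) := by
    rw [div_lt_iff₀ (by linarith)] at hp
    rw [div_add_one hd'.ne', mul_div_assoc', one_lt_div hd']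
    linarith
  obtain ⟨C, hC⟩ := exists_tsum_seriesTerm_le (by positivity) hp0 hps
  change ∑' n, ∫⁻ z in Set.Ioi 0, ENNReal.ofReal (seriesTerm (2 / d) p z n) ∂lam ≠ ⊤
  rw [← lintegral_tsum fun n => by unfold seriesTerm; fun_prop]
  refine ne_top_of_le_ne_top ?_ (setLIntegral_mono (by fun_prop) hC)
  rw [lintegral_const_mul' _ _ ENNReal.ofReal_ne_top]
  exact ENNReal.mul_ne_top ENNReal.ofReal_ne_top hmom

theorem series_finite_for_fast_polynomial_sequence (d : ℕ) (hd : 0 < d)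
    (p : ℝ) (hp : (d : ℝ) / (d + 2) < p) (lam : Measure ℝ)
    (hsupp : lam (Set.Iic 0) = 0)
    (hmom : ∫⁻ z in Set.Ioi (0 : ℝ),
        ENNReal.ofReal (z * Real.log (Real.exp 1 + z)) ∂lam ≠ ⊤) :
    (∑' n : ℕ, ∫⁻ z in Set.Ioi (0 : ℝ),
        ENNReal.ofReal
          (min ((z / ((n : ℝ) + 1) ^ p) ^ (2 / (d : ℝ)))
              (((n : ℝ) + 1) ^ p - (n : ℝ) ^ p)
            * (z / ((n : ℝ) + 1) ^ p)) ∂lam) ≠ ⊤ :=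
  series_finite_for_fast_polynomial_sequence_general d hd p hp lam hmom
end

section
/- Let 0 < p ≤ d/(d+2) and t_n = n^p, Δt_n = t_n - t_{n-1}. Let λ be a nonzero measure on (0,∞). Then ∑_{n≥1} ∫₀^∞ ((z/t_n)^{2/d} ∧ Δt_n) · (z/t_n) λ(dz) = ∞. -/
/-!
Since `λ ≠ 0` lives on `(0, ∞)`, it charges some `(ε, ∞)`. For `z > ε` each summand is at least
a constant multiple of `1 / n`: by concavity `Δtₙ ≥ p n^(p-1)`, and `p ≤ d/(d+2)` is exactly what
makes `(ε / tₙ)^(2/d) ≳ n^(-2p/d)` dominate `n^(p-1)`; the remaining factor `z / tₙ ≥ ε n^(-p)`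
then produces `1 / n`, and the harmonic series diverges.
-/

open MeasureTheory Set

lemma exists_lt_measure_Ioi_ne_zero {μ : Measure ℝ} {a : ℝ} (hμ : μ ≠ 0)
    (ha : μ (Iic a) = 0) : ∃ b, a < b ∧ μ (Ioi b) ≠ 0 := by
  by_contra! h
  have hIoi : Ioi a = ⋃ n : ℕ, Ioi (a + 1 / ((n : ℝ) + 1)) := by
    ext x
    simp only [mem_Ioi, mem_iUnion]
    constructor
    · intro hx
      obtain ⟨n, hn⟩ := exists_nat_one_div_lt (sub_pos.2 hx)
      exact ⟨n, by linarith⟩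
    · rintro ⟨n, hn⟩
      exact lt_of_le_of_lt (le_add_of_nonneg_right (by positivity)) hn
  have hIoi_null : μ (Ioi a) = 0 := by
    rw [hIoi, measure_iUnion_null_iff]
    exact fun n => h _ (lt_add_of_pos_right a (by positivity))
  apply hμ
  rw [← Measure.measure_univ_eq_zero, ← Iic_union_Ioi (a := a)]
  exact measure_union_null ha hIoi_null

lemma tsum_ofReal_div_natCast_add_one_eq_top {c : ℝ} (hc : 0 < c) :
    ∑' n : ℕ, ENNReal.ofReal (c / ((n : ℝ) + 1)) = ⊤ := by
  by_contra h
  have hsum : Summable fun n : ℕ => c * (1 / ((n : ℝ) + 1)) :=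
    (ENNReal.summable_toReal h).congr fun n => by
      rw [ENNReal.toReal_ofReal (by positivity), div_eq_mul_one_div]
  rw [summable_mul_left_iff hc.ne'] at hsum
  exact Real.not_summable_one_div_natCast
    ((summable_nat_add_iff 1).1 (by exact_mod_cast hsum))

lemma mul_rpow_sub_one_mul_sub_le_rpow_sub_rpow {p x y : ℝ} (hp0 : 0 ≤ p) (hp1 : p ≤ 1)
    (hx : 0 ≤ x) (hxy : x ≤ y) : p * y ^ (p - 1) * (y - x) ≤ y ^ p - x ^ p := by
  rcases hxy.eq_or_lt with rfl | hlt
  · simp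
  have hy : 0 < y := hx.trans_lt hlt
  have hbern := rpow_one_add_le_one_add_mul_self (s := x / y - 1)
    (by linarith [div_nonneg hx hy.le]) hp0 hp1
  rw [add_sub_cancel, Real.div_rpow hx hy.le, div_le_iff₀ (by positivity)] at hbern
  rw [Real.rpow_sub_one hy.ne']
  have hyp : (1 + p * (x / y - 1)) * y ^ p = y ^ p - p * (y ^ p / y) * (y - x) := by
    field_simp
    ring
  linarith

lemma div_le_min_rpow_mul {a p ε x z : ℝ} (ha : 0 ≤ a) (hp : 0 ≤ p) (hpa : p * (1 + a) ≤ 1)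
    (hε : 0 ≤ ε) (hεz : ε ≤ z) (hx : 0 ≤ x) :
    min (ε ^ a) p * ε / (x + 1) ≤
      min ((z / (x + 1) ^ p) ^ a) ((x + 1) ^ p - x ^ p) * (z / (x + 1) ^ p) := by
  have hy : 0 < x + 1 := by linarith
  have ht : 0 < (x + 1) ^ p := Real.rpow_pos_of_pos hy p
  have hincr : p * (x + 1) ^ (p - 1) ≤ (x + 1) ^ p - x ^ p := by
    simpa using mul_rpow_sub_one_mul_sub_le_rpow_sub_rpow hp (by nlinarith) hx
      (le_add_of_nonneg_right zero_le_one)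
  have hpow : ε ^ a * (x + 1) ^ (p - 1) ≤ (z / (x + 1) ^ p) ^ a := calc
    ε ^ a * (x + 1) ^ (p - 1) ≤ ε ^ a * (x + 1) ^ (-(p * a)) := by
      gcongr
      · linarith
      · nlinarith
    _ = (ε / (x + 1) ^ p) ^ a := by
      rw [Real.div_rpow hε ht.le, ← Real.rpow_mul hy.le, Real.rpow_neg hy.le, div_eq_mul_inv]
    _ ≤ (z / (x + 1) ^ p) ^ a := by gcongr
  have hmin : min (ε ^ a) p * (x + 1) ^ (p - 1) ≤
      min ((z / (x + 1) ^ p) ^ a) ((x + 1) ^ p - x ^ p) :=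
    le_min ((mul_le_mul_of_nonneg_right (min_le_left _ _) (by positivity)).trans hpow)
      ((mul_le_mul_of_nonneg_right (min_le_right _ _) (by positivity)).trans hincr)
  calc min (ε ^ a) p * ε / (x + 1)
      = min (ε ^ a) p * (x + 1) ^ (p - 1) * (ε / (x + 1) ^ p) := by
        rw [Real.rpow_sub_one hy.ne']
        field_simp
    _ ≤ min ((z / (x + 1) ^ p) ^ a) ((x + 1) ^ p - x ^ p) * (z / (x + 1) ^ p) := by
      gcongr
      exact (mul_nonneg (by positivity) (by positivity)).trans hmin

lemma tsum_setLIntegral_eq_top_of_div_le {α : Type*} [MeasurableSpace α] {μ : Measure α}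
    {s t : Set α} {f : ℕ → α → ℝ} {c : ℝ} (hc : 0 < c) (ht : MeasurableSet t) (hts : t ⊆ s)
    (hμt : μ t ≠ 0) (hf : ∀ n : ℕ, ∀ z ∈ t, c / ((n : ℝ) + 1) ≤ f n z) :
    ∑' n, ∫⁻ z in s, ENNReal.ofReal (f n z) ∂μ = ⊤ := by
  refine top_le_iff.1 ?_
  calc (⊤ : ENNReal)
      = (∑' n : ℕ, ENNReal.ofReal (c / ((n : ℝ) + 1))) * μ t := by
        rw [tsum_ofReal_div_natCast_add_one_eq_top hc, ENNReal.top_mul hμt]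
    _ = ∑' n : ℕ, ∫⁻ _ in t, ENNReal.ofReal (c / ((n : ℝ) + 1)) ∂μ := by
        simp only [setLIntegral_const, ENNReal.tsum_mul_right]
    _ ≤ ∑' n, ∫⁻ z in t, ENNReal.ofReal (f n z) ∂μ :=
        ENNReal.tsum_le_tsum fun n =>
          setLIntegral_mono' ht fun z hz => ENNReal.ofReal_le_ofReal (hf n z hz)
    _ ≤ _ := ENNReal.tsum_le_tsum fun n => lintegral_mono_set hts

theorem series_infinite_for_slow_polynomial_sequence_general (d : ℕ)
    (p : ℝ) (hp0 : 0 < p) (hp : p ≤ (d : ℝ) / (d + 2)) (lam : Measure ℝ)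
    (hne : lam ≠ 0) (hsupp : lam (Set.Iic 0) = 0) :
    (∑' n : ℕ, ∫⁻ z in Set.Ioi (0 : ℝ),
        ENNReal.ofReal
          (min ((z / ((n : ℝ) + 1) ^ p) ^ (2 / (d : ℝ)))
              (((n : ℝ) + 1) ^ p - (n : ℝ) ^ p)
            * (z / ((n : ℝ) + 1) ^ p)) ∂lam) = ⊤ := by
  have hd : (0 : ℝ) < d := by
    rcases d.eq_zero_or_pos with rfl | hd
    · norm_num at hp
      linarith
    · exact_mod_cast hd
  have hpa : p * (1 + 2 / (d : ℝ)) ≤ 1 := by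
    rw [le_div_iff₀ (by positivity)] at hp
    rw [mul_one_add, mul_div_assoc', ← sub_nonneg]
    field_simp
    linarith
  obtain ⟨ε, hε, hlamε⟩ := exists_lt_measure_Ioi_ne_zero hne hsupp
  exact tsum_setLIntegral_eq_top_of_div_le (c := min (ε ^ (2 / (d : ℝ))) p * ε) (by positivity)
    measurableSet_Ioi (Ioi_subset_Ioi hε.le) hlamε fun n z hz =>
      div_le_min_rpow_mul (by positivity) hp0.le hpa hε.le (le_of_lt hz) n.cast_nonneg

theorem series_infinite_for_slow_polynomial_sequence (d : ℕ) (hd : 0 < d)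
    (p : ℝ) (hp0 : 0 < p) (hp : p ≤ (d : ℝ) / (d + 2)) (lam : Measure ℝ)
    (hne : lam ≠ 0) (hsupp : lam (Set.Iic 0) = 0) :
    (∑' n : ℕ, ∫⁻ z in Set.Ioi (0 : ℝ),
        ENNReal.ofReal
          (min ((z / ((n : ℝ) + 1) ^ p) ^ (2 / (d : ℝ)))
              (((n : ℝ) + 1) ^ p - (n : ℝ) ^ p)
            * (z / ((n : ℝ) + 1) ^ p)) ∂lam) = ⊤ :=
  series_infinite_for_slow_polynomial_sequence_general d p hp0 hp lam hne hsupp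
end

section
/- Let ψ : (0,∞) → (0,∞) be continuous, strictly decreasing with ψ(0+) = ∞, of the form ψ(r) = (v_d/r) ∫₀^r λ̄(z) dz for a measure λ on (0,∞) with ∫₀^1 z |log z| λ(dz) < ∞, where λ̄(z) = λ((z,∞)) and v_d > 0. Then ∫_{ψ(1)}^∞ ψ^{-1}(x) dx = v_d ∫₀^1 z |log z| λ(dz), and in particular this integral is finite. -/
/-!
The left side is the area of `{(x, t) | 0 < t < 1, ψ 1 < x < ψ t}`: its `x`-sections are
`(0, ψ⁻¹ x)` and its `t`-sections `(ψ 1, ψ t)`, so it equals `∫₀¹ (ψ t - ψ 1) dt`.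
Swapping the order of integration, `∫₀¹ t⁻¹ ∫₀ᵗ λ̄ = ∫₀¹ λ̄(z) |log z| dz`, and the layer-cake
formula turns `∫₀¹ λ̄ g` into `∫ G (min w 1) λ(dw)` with `G' = g`. For `g = |log|` this is
`m + m |log m|` with `m = min w 1`, for `g = 1` just `m`; the finite terms `∫ min w 1 λ(dw)`
coming from `∫₀¹ ψ` and from `ψ 1` cancel.
-/

open MeasureTheory Filter Set Topology

lemma surjOn_Ioo_of_tendsto_atTop {ψ : ℝ → ℝ} {a : ℝ} (ha : 0 < a)
    (hcont : ContinuousOn ψ (Ioc 0 a)) (hlim : Tendsto ψ (𝓝[>] 0) atTop) :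
    SurjOn ψ (Ioo 0 a) (Ioi (ψ a)) := by
  intro x hx
  obtain ⟨r₀, hr₀x, hr₀⟩ :=
    ((hlim.eventually_gt_atTop x).and (Ioo_mem_nhdsGT ha)).exists
  obtain ⟨r, hr, rfl⟩ := intermediate_value_Ioo' hr₀.2.le
    (hcont.mono (Icc_subset_Ioc_iff hr₀.2.le |>.2 ⟨hr₀.1, le_rfl⟩)) ⟨hx, hr₀x⟩
  exact ⟨r, ⟨hr₀.1.trans hr.1, hr.2⟩, rfl⟩

lemma lintegral_Ioi_leftInv_eq_lintegral_Ioo_sub {ψ ψinv : ℝ → ℝ} {a : ℝ} (ha : 0 < a)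
    (hcont : ContinuousOn ψ (Ioc 0 a)) (hanti : StrictAntiOn ψ (Ioc 0 a))
    (hlim : Tendsto ψ (𝓝[>] 0) atTop) (hinv : LeftInvOn ψinv ψ (Ioo 0 a)) :
    ∫⁻ x in Ioi (ψ a), ENNReal.ofReal (ψinv x) = ∫⁻ t in Ioo 0 a, ENNReal.ofReal (ψ t - ψ a) := by
  set S : Set (ℝ × ℝ) := {p | p.2 ∈ Ioo 0 a ∧ ψ a < p.1 ∧ p.1 < ψ p.2}
  have hS : MeasurableSet S := by
    have hU : IsOpen {p : ℝ × ℝ | p.2 ∈ Ioo 0 a ∧ ψ a < p.1} :=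
      (isOpen_Ioo.preimage continuous_snd).inter (isOpen_lt continuous_const continuous_fst)
    have hf : ContinuousOn (fun p : ℝ × ℝ => (p.1, ψ p.2)) {p | p.2 ∈ Ioo 0 a ∧ ψ a < p.1} :=
      continuous_fst.continuousOn.prodMk
        (hcont.comp continuous_snd.continuousOn fun p hp => Ioo_subset_Ioc_self hp.1)
    convert (hf.isOpen_inter_preimage hU (isOpen_lt continuous_fst continuous_snd)).measurableSet
      using 1
    ext p
    simp only [S, mem_inter_iff, mem_preimage, mem_ofPred_eq, and_assoc]
  have hx_sect : ∀ x, volume (Prod.mk x ⁻¹' S)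
      = (Ioi (ψ a)).indicator (fun x => ENNReal.ofReal (ψinv x)) x := by
    intro x
    by_cases hx : ψ a < x
    · obtain ⟨r, hr, rfl⟩ := surjOn_Ioo_of_tendsto_atTop ha hcont hlim hx
      have : Prod.mk (ψ r) ⁻¹' S = Ioo 0 r := by
        ext t
        simp only [S, mem_preimage, mem_ofPred_eq, mem_Ioo]
        constructor
        · rintro ⟨⟨ht0, hta⟩, -, hrt⟩
          exact ⟨ht0, (hanti.lt_iff_gt ⟨hr.1, hr.2.le⟩ ⟨ht0, hta.le⟩).1 hrt⟩
        · rintro ⟨ht0, htr⟩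
          exact ⟨⟨ht0, htr.trans hr.2⟩, hx,
            hanti ⟨ht0, (htr.trans hr.2).le⟩ ⟨hr.1, hr.2.le⟩ htr⟩
      rw [this, Real.volume_Ioo, sub_zero, indicator_of_mem (mem_Ioi.2 hx), hinv hr]
    · have : Prod.mk x ⁻¹' S = ∅ := eq_empty_of_forall_notMem fun t ht => hx ht.2.1
      rw [this, measure_empty, indicator_of_notMem (notMem_Ioi.2 (not_lt.1 hx))]
  have ht_sect : ∀ t, volume ((fun x => (x, t)) ⁻¹' S)
      = (Ioo 0 a).indicator (fun t => ENNReal.ofReal (ψ t - ψ a)) t := by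
    intro t
    by_cases ht : t ∈ Ioo 0 a
    · have : (fun x => (x, t)) ⁻¹' S = Ioo (ψ a) (ψ t) := by
        ext x
        simp [S, ht.1, ht.2]
      rw [this, Real.volume_Ioo, indicator_of_mem ht]
    · have : (fun x => (x, t)) ⁻¹' S = ∅ := eq_empty_of_forall_notMem fun x hx => ht hx.1
      rw [this, measure_empty, indicator_of_notMem ht]
  calc ∫⁻ x in Ioi (ψ a), ENNReal.ofReal (ψinv x)
      = volume.prod volume S := by
        rw [Measure.prod_apply hS, lintegral_congr hx_sect, lintegral_indicator measurableSet_Ioi]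
    _ = ∫⁻ t in Ioo 0 a, ENNReal.ofReal (ψ t - ψ a) := by
        rw [Measure.prod_apply_symm hS, lintegral_congr ht_sect,
          lintegral_indicator measurableSet_Ioo]

lemma lintegral_Ioo_lintegral_Ioc_swap {F : ℝ → ℝ → ENNReal} (hF : Measurable (Function.uncurry F))
    (a : ℝ) :
    ∫⁻ t in Ioo 0 a, ∫⁻ z in Ioc 0 t, F t z = ∫⁻ z in Ioo 0 a, ∫⁻ t in Ico z a, F t z := by
  set G : ℝ → ℝ → ENNReal :=
    fun t z => {p : ℝ × ℝ | p.2 ≤ p.1}.indicator (Function.uncurry F) (t, z)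
  have hG : Measurable (Function.uncurry G) :=
    hF.indicator (measurableSet_le measurable_snd measurable_fst)
  have inner_z : ∀ t ∈ Ioo (0 : ℝ) a, ∫⁻ z in Ioc 0 t, F t z = ∫⁻ z in Ioo 0 a, G t z := by
    intro t ht
    have : Iic t ∩ Ioo 0 a = Ioc 0 t := by
      ext z; constructor
      · rintro ⟨hzt, hz0, -⟩; exact ⟨hz0, hzt⟩
      · rintro ⟨hz0, hzt⟩; exact ⟨hzt, hz0, hzt.trans_lt ht.2⟩
    rw [← this, ← Measure.restrict_restrict measurableSet_Iic,
      ← lintegral_indicator measurableSet_Iic]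
    rfl
  have inner_t : ∀ z ∈ Ioo (0 : ℝ) a, ∫⁻ t in Ico z a, F t z = ∫⁻ t in Ioo 0 a, G t z := by
    intro z hz
    have : Ici z ∩ Ioo 0 a = Ico z a := by
      ext t; constructor
      · rintro ⟨hzt, -, hta⟩; exact ⟨hzt, hta⟩
      · rintro ⟨hzt, hta⟩; exact ⟨hzt, hz.1.trans_le hzt, hta⟩
    rw [← this, ← Measure.restrict_restrict measurableSet_Ici,
      ← lintegral_indicator measurableSet_Ici]
    rfl
  rw [setLIntegral_congr_fun measurableSet_Ioo inner_z,
    setLIntegral_congr_fun measurableSet_Ioo inner_t,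
    lintegral_lintegral_swap hG.aemeasurable]

lemma lintegral_Ico_ofReal_inv {z a : ℝ} (hz : 0 < z) (hza : z ≤ a) :
    ∫⁻ t in Ico z a, ENNReal.ofReal t⁻¹ = ENNReal.ofReal (Real.log (a / z)) := by
  have hpos : ∀ t ∈ Icc z a, 0 < t := fun t ht => hz.trans_le ht.1
  rw [Measure.restrict_congr_set Ico_ae_eq_Ioc, ← ofReal_integral_eq_lintegral_ofReal,
    ← intervalIntegral.integral_of_le hza, integral_inv]
  · rw [uIcc_of_le hza]; exact fun h => (hpos 0 h).false
  · exact (continuousOn_inv₀.mono fun t ht => (hpos t ht).ne').integrableOn_Icc.mono_set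
      Ioc_subset_Icc_self
  · filter_upwards [ae_restrict_mem measurableSet_Ioc] with t ht
    exact inv_nonneg.2 (hpos t (Ioc_subset_Icc_self ht)).le

lemma integral_abs_log_of_le_one {m : ℝ} (hm0 : 0 ≤ m) (hm1 : m ≤ 1) :
    ∫ t in 0..m, |Real.log t| = m + m * |Real.log m| := by
  have hneg : ∀ t ∈ uIcc 0 m, |Real.log t| = -Real.log t := fun t ht => by
    rw [uIcc_of_le hm0] at ht
    exact abs_of_nonpos (Real.log_nonpos ht.1 (ht.2.trans hm1))
  rw [intervalIntegral.integral_congr hneg, intervalIntegral.integral_neg, integral_log,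
    hneg m right_mem_uIcc]
  simp only [Real.log_zero, mul_zero, sub_zero, add_zero, neg_sub, mul_neg]
  ring

lemma lintegral_Ioo_measure_Ioi_mul (lam : Measure ℝ) {a : ℝ} (ha : 0 ≤ a) {g : ℝ → ℝ}
    (hg : ∀ t > 0, IntervalIntegrable g volume 0 t) (hg0 : ∀ t > 0, 0 ≤ g t) :
    ∫⁻ z in Ioo 0 a, lam (Ioi z) * ENNReal.ofReal (g z)
      = ∫⁻ w in Ioi 0, ENNReal.ofReal (∫ t in 0..min w a, g t) ∂lam := by
  rw [lintegral_comp_eq_lintegral_meas_lt_mul _ _ (by fun_prop) hg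
    ((ae_restrict_iff' measurableSet_Ioi).2 (ae_of_all _ hg0))]
  · have : ∀ z ∈ Ioi (0 : ℝ), lam.restrict (Ioi 0) {w | z < min w a} * ENNReal.ofReal (g z)
        = (Iio a).indicator (fun z => lam (Ioi z) * ENNReal.ofReal (g z)) z := by
      intro z hz
      rw [Measure.restrict_apply' measurableSet_Ioi]
      by_cases hza : z < a
      · have : {w | z < min w a} ∩ Ioi 0 = Ioi z := by
          ext w
          simp only [mem_inter_iff, mem_ofPred_eq, lt_min_iff, mem_Ioi]
          exact ⟨fun h => h.1.1, fun h => ⟨⟨h, hza⟩, (mem_Ioi.1 hz).trans h⟩⟩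
        rw [this, indicator_of_mem (mem_Iio.2 hza)]
      · have : {w | z < min w a} ∩ Ioi 0 = ∅ := by
          ext w; simp [hza]
        rw [this, indicator_of_notMem (notMem_Iio.2 (not_lt.1 hza)), measure_empty, zero_mul]
    rw [setLIntegral_congr_fun measurableSet_Ioi this, lintegral_indicator measurableSet_Iio,
      Measure.restrict_restrict measurableSet_Iio, Iio_inter_Ioi]
  · exact (ae_restrict_iff' measurableSet_Ioi).2 (ae_of_all _ fun w hw => le_min (le_of_lt hw) ha)

section Tail

variable (lam : Measure ℝ)

lemma measurable_measure_Ioi : Measurable fun z : ℝ => lam (Ioi z) :=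
  Antitone.measurable fun _ _ h => measure_mono (Ioi_subset_Ioi h)

lemma lintegral_Ioc_measure_Ioi {a : ℝ} (ha : 0 ≤ a) :
    ∫⁻ z in Ioc 0 a, lam (Ioi z) = ∫⁻ w in Ioi 0, ENNReal.ofReal (min w a) ∂lam := by
  rw [← Measure.restrict_congr_set Ioo_ae_eq_Ioc]
  simpa using lintegral_Ioo_measure_Ioi_mul lam ha (g := fun _ => 1)
    (fun _ _ => intervalIntegrable_const) (fun _ _ => zero_le_one)

variable {lam}

lemma lintegral_Ioc_measure_Ioi_ne_top (hmom : ∫⁻ z in Ioi 0, ENNReal.ofReal z ∂lam ≠ ⊤)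
    {a : ℝ} (ha : 0 ≤ a) : ∫⁻ z in Ioc 0 a, lam (Ioi z) ≠ ⊤ := by
  rw [lintegral_Ioc_measure_Ioi lam ha]
  exact ne_top_of_le_ne_top hmom
    (lintegral_mono fun w => ENNReal.ofReal_le_ofReal (min_le_left w a))

lemma ofReal_setIntegral_toReal_measure_Ioi (hmom : ∫⁻ z in Ioi 0, ENNReal.ofReal z ∂lam ≠ ⊤)
    {a : ℝ} (ha : 0 ≤ a) :
    ENNReal.ofReal (∫ z in Ioc 0 a, (lam (Ioi z)).toReal) = ∫⁻ z in Ioc 0 a, lam (Ioi z) := by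
  have hfin := lintegral_Ioc_measure_Ioi_ne_top hmom ha
  rw [integral_toReal (measurable_measure_Ioi lam).aemeasurable
    (ae_lt_top (measurable_measure_Ioi lam) hfin), ENNReal.ofReal_toReal hfin]

lemma lintegral_Ioo_inv_mul_lintegral_Ioc_measure_Ioi :
    ∫⁻ t in Ioo 0 1, ENNReal.ofReal t⁻¹ * ∫⁻ z in Ioc 0 t, lam (Ioi z)
      = ∫⁻ w in Ioi 0, ENNReal.ofReal (min w 1) ∂lam
        + ∫⁻ w in Ioc 0 1, ENNReal.ofReal (w * |Real.log w|) ∂lam := by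
  have hm := measurable_measure_Ioi lam
  have hlog_tail : ∫⁻ w in Ioi 0, ENNReal.ofReal (min w 1 * |Real.log (min w 1)|) ∂lam
      = ∫⁻ w in Ioc 0 1, ENNReal.ofReal (w * |Real.log w|) ∂lam := by
    rw [← Ioc_union_Ioi_eq_Ioi zero_le_one, lintegral_union measurableSet_Ioi
      (Ioc_disjoint_Ioi le_rfl), setLIntegral_congr_fun measurableSet_Ioc
        fun w hw => by rw [min_eq_left hw.2],
      (setLIntegral_congr_fun measurableSet_Ioi
        fun w (hw : 1 < w) => by simp [min_eq_right hw.le]).trans lintegral_zero, add_zero]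
  calc ∫⁻ t in Ioo 0 1, ENNReal.ofReal t⁻¹ * ∫⁻ z in Ioc 0 t, lam (Ioi z)
      = ∫⁻ t in Ioo 0 1, ∫⁻ z in Ioc 0 t, ENNReal.ofReal t⁻¹ * lam (Ioi z) := by
        simp_rw [lintegral_const_mul' _ _ ENNReal.ofReal_ne_top]
    _ = ∫⁻ z in Ioo 0 1, ∫⁻ t in Ico z 1, ENNReal.ofReal t⁻¹ * lam (Ioi z) :=
        lintegral_Ioo_lintegral_Ioc_swap
          (by exact measurable_fst.inv.ennreal_ofReal.mul (hm.comp measurable_snd)) 1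
    _ = ∫⁻ z in Ioo 0 1, lam (Ioi z) * ENNReal.ofReal |Real.log z| := by
        refine setLIntegral_congr_fun measurableSet_Ioo fun z hz => ?_
        rw [lintegral_mul_const _ (by fun_prop), lintegral_Ico_ofReal_inv hz.1 hz.2.le, mul_comm,
          one_div, Real.log_inv, abs_of_nonpos (Real.log_nonpos hz.1.le hz.2.le)]
    _ = ∫⁻ w in Ioi 0, ENNReal.ofReal (∫ t in 0..min w 1, |Real.log t|) ∂lam :=
        lintegral_Ioo_measure_Ioi_mul lam zero_le_one
          (fun _ _ => intervalIntegral.intervalIntegrable_log'.abs)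
          fun _ _ => abs_nonneg _
    _ = ∫⁻ w in Ioi 0, (ENNReal.ofReal (min w 1)
          + ENNReal.ofReal (min w 1 * |Real.log (min w 1)|)) ∂lam := by
        refine setLIntegral_congr_fun measurableSet_Ioi fun w (hw : 0 < w) => ?_
        have hm0 : 0 ≤ min w 1 := le_min hw.le zero_le_one
        rw [integral_abs_log_of_le_one hm0 (min_le_right w 1),
          ENNReal.ofReal_add hm0 (by positivity)]
    _ = _ := by rw [lintegral_add_left (by fun_prop), hlog_tail]

lemma lintegral_Ioo_ofReal_sub_eq_mul_lintegral_mul_abs_log {vd : ℝ} (hvd : 0 ≤ vd)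
    (hmom : ∫⁻ z in Ioi 0, ENNReal.ofReal z ∂lam ≠ ⊤) {ψ : ℝ → ℝ}
    (hψ : ∀ r > 0, ψ r = vd / r * ∫ z in Ioc 0 r, (lam (Ioi z)).toReal)
    (hψ_ge : ∀ t ∈ Ioo (0 : ℝ) 1, ψ 1 ≤ ψ t) :
    ∫⁻ t in Ioo 0 1, ENNReal.ofReal (ψ t - ψ 1)
      = ENNReal.ofReal vd * ∫⁻ z in Ioc 0 1, ENNReal.ofReal (z * |Real.log z|) ∂lam := by
  have hψ_ofReal : ∀ t > 0, ENNReal.ofReal (ψ t)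
      = ENNReal.ofReal vd * (ENNReal.ofReal t⁻¹ * ∫⁻ z in Ioc 0 t, lam (Ioi z)) := fun t ht => by
    rw [hψ t ht, div_eq_mul_inv, mul_assoc, ENNReal.ofReal_mul hvd,
      ENNReal.ofReal_mul (inv_nonneg.2 ht.le), ofReal_setIntegral_toReal_measure_Ioi hmom ht.le]
  set B := ∫⁻ w in Ioi 0, ENNReal.ofReal (min w 1) ∂lam
  have hB : B ≠ ⊤ := by
    simpa only [lintegral_Ioc_measure_Ioi lam zero_le_one] using
      lintegral_Ioc_measure_Ioi_ne_top hmom zero_le_one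
  have hψ1 : ENNReal.ofReal (ψ 1) = ENNReal.ofReal vd * B := by
    rw [hψ_ofReal 1 one_pos, inv_one, ENNReal.ofReal_one, one_mul,
      lintegral_Ioc_measure_Ioi lam zero_le_one]
  have hψ1_nonneg : 0 ≤ ψ 1 := by
    rw [hψ 1 one_pos]
    exact mul_nonneg (div_nonneg hvd zero_le_one)
      (integral_nonneg fun _ => ENNReal.toReal_nonneg)
  have hψ_ge_ae : ∀ᵐ t ∂volume.restrict (Ioo (0 : ℝ) 1),
      ENNReal.ofReal (ψ 1) ≤ ENNReal.ofReal (ψ t) := by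
    filter_upwards [ae_restrict_mem measurableSet_Ioo] with t ht
    exact ENNReal.ofReal_le_ofReal (hψ_ge t ht)
  calc ∫⁻ t in Ioo 0 1, ENNReal.ofReal (ψ t - ψ 1)
      = (∫⁻ t in Ioo 0 1, ENNReal.ofReal (ψ t)) - ENNReal.ofReal (ψ 1) := by
        simp_rw [ENNReal.ofReal_sub _ hψ1_nonneg]
        rw [lintegral_sub measurable_const (by simp [hψ1, ENNReal.mul_eq_top, hB]) hψ_ge_ae,
          setLIntegral_const, Real.volume_Ioo, sub_zero, ENNReal.ofReal_one, mul_one]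
    _ = ENNReal.ofReal vd * (B + ∫⁻ z in Ioc 0 1, ENNReal.ofReal (z * |Real.log z|) ∂lam)
          - ENNReal.ofReal vd * B := by
        rw [setLIntegral_congr_fun measurableSet_Ioo fun t ht => hψ_ofReal t ht.1,
          lintegral_const_mul' _ _ ENNReal.ofReal_ne_top,
          lintegral_Ioo_inv_mul_lintegral_Ioc_measure_Ioi, hψ1]
    _ = _ := by
        rw [mul_add, ENNReal.add_sub_cancel_left (ENNReal.mul_ne_top ENNReal.ofReal_ne_top hB)]

end Tail

theorem integral_of_inverse_psi_general (vd : ℝ) (hvd : 0 < vd) (lam : Measure ℝ)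
    (hmom1 : ∫⁻ z in Set.Ioi (0 : ℝ), ENNReal.ofReal z ∂lam ≠ ⊤)
    (ψ ψinv : ℝ → ℝ)
    (hψ : ∀ r > (0 : ℝ),
        ψ r = (vd / r) * ∫ z in Set.Ioc (0 : ℝ) r, (lam (Set.Ioi z)).toReal)
    (hcont : ContinuousOn ψ (Set.Ioi 0))
    (hanti : StrictAntiOn ψ (Set.Ioi 0))
    (hlim : Tendsto ψ (nhdsWithin 0 (Set.Ioi 0)) atTop)
    (hinv : ∀ r > (0 : ℝ), ψinv (ψ r) = r) :
    ∫⁻ x in Set.Ioi (ψ 1), ENNReal.ofReal (ψinv x)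
      = ENNReal.ofReal vd
          * ∫⁻ z in Set.Ioc (0 : ℝ) 1, ENNReal.ofReal (z * |Real.log z|) ∂lam := by
  calc ∫⁻ x in Ioi (ψ 1), ENNReal.ofReal (ψinv x)
      = ∫⁻ t in Ioo 0 1, ENNReal.ofReal (ψ t - ψ 1) :=
        lintegral_Ioi_leftInv_eq_lintegral_Ioo_sub one_pos (hcont.mono Ioc_subset_Ioi_self)
          (hanti.mono Ioc_subset_Ioi_self) hlim fun r hr => hinv r hr.1
    _ = _ := lintegral_Ioo_ofReal_sub_eq_mul_lintegral_mul_abs_log hvd.le hmom1 hψ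
        fun t ht => (hanti (mem_Ioi.2 ht.1) (mem_Ioi.2 one_pos) ht.2).le

theorem integral_of_inverse_psi (vd : ℝ) (hvd : 0 < vd) (lam : Measure ℝ)
    (hsupp : lam (Set.Iic 0) = 0) (hinf : lam (Set.Ioi 0) = ⊤)
    (hmom1 : ∫⁻ z in Set.Ioi (0 : ℝ), ENNReal.ofReal z ∂lam ≠ ⊤)
    (hmomlog : ∫⁻ z in Set.Ioc (0 : ℝ) 1,
        ENNReal.ofReal (z * |Real.log z|) ∂lam ≠ ⊤)
    (ψ ψinv : ℝ → ℝ)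
    (hψ : ∀ r > (0 : ℝ),
        ψ r = (vd / r) * ∫ z in Set.Ioc (0 : ℝ) r, (lam (Set.Ioi z)).toReal)
    (hcont : ContinuousOn ψ (Set.Ioi 0))
    (hanti : StrictAntiOn ψ (Set.Ioi 0))
    (hlim : Tendsto ψ (nhdsWithin 0 (Set.Ioi 0)) atTop)
    (hinv : ∀ r > (0 : ℝ), ψinv (ψ r) = r) :
    ∫⁻ x in Set.Ioi (ψ 1), ENNReal.ofReal (ψinv x)
      = ENNReal.ofReal vd
          * ∫⁻ z in Set.Ioc (0 : ℝ) 1, ENNReal.ofReal (z * |Real.log z|) ∂lam :=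
  integral_of_inverse_psi_general vd hvd lam hmom1 ψ ψinv hψ hcont hanti hlim hinv
end
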